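/- Let n be a positive integer and P ≥ 1 a real number. If F is a finite set of triples (i1, i2, i3) with 1 ≤ i1, i2, i3 ≤ n and |F| ≥ n³/P, then |φ_A(F)| + |φ_B(F)| + |φ_C(F)| ≥ 3·n²/P^{2/3}. -/

import Mathlib

/-!
Cauchy–Schwarz over the fibres of the projection to the `(i1, i3)` plane, followed by an
injection of pairs of triples in a common fibre into `φ_A(F) × φ_B(F)`, gives the discrete
Loomis–Whitney inequality `|F|² ≤ |φ_A(F)| |φ_B(F)| |φ_C(F)|`. AM–GM then turns this product
bound into the bound on the sum.
-/

open Finset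

section LoomisWhitney

variable {α β γ : Type*} [DecidableEq α] [DecidableEq β] [DecidableEq γ]

lemma sum_card_fiber_sq_le_card_image_mul_card_image (F : Finset (α × β × γ)) :
    ∑ p ∈ F.image (fun t => (t.1, t.2.2)), #{t ∈ F | (t.1, t.2.2) = p} ^ 2 ≤
      #(F.image fun t => (t.1, t.2.1)) * #(F.image fun t => (t.2.1, t.2.2)) := by
  simp_rw [sq, ← card_product]
  rw [← card_sigma]
  -- a pair `(t, u)` in a common fibre is recovered from `(t.1, t.2.1)` and `(u.2.1, u.2.2)`
  refine card_le_card_of_injOn (fun x => ((x.2.1.1, x.2.1.2.1), (x.2.2.2.1, x.2.2.2.2))) ?_ ?_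
  · rintro ⟨p, t, u⟩ hx
    simp only [coe_sigma, Set.mem_sigma_iff, coe_product, Set.mem_prod, mem_coe, mem_filter] at hx
    exact mem_product.2 ⟨mem_image_of_mem _ hx.2.1.1, mem_image_of_mem _ hx.2.2.1⟩
  · rintro ⟨p, ⟨a, b, c⟩, ⟨a', b', c'⟩⟩ hx ⟨q, ⟨d, e, f⟩, ⟨d', e', f'⟩⟩ hy hxy
    simp only [coe_sigma, Set.mem_sigma_iff, coe_product, Set.mem_prod, mem_coe,
      mem_filter] at hx hy
    simp only [Prod.mk.injEq] at hxy
    obtain ⟨⟨rfl, rfl⟩, rfl, rfl⟩ := hxy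
    obtain ⟨-, ⟨-, rfl⟩, -, hp⟩ := hx
    obtain ⟨-, ⟨-, rfl⟩, -, hq⟩ := hy
    simp only [Prod.mk.injEq] at hp hq
    obtain ⟨rfl, rfl⟩ := hp
    obtain ⟨rfl, rfl⟩ := hq
    rfl

lemma card_sq_le_card_image_mul_card_image_mul_card_image (F : Finset (α × β × γ)) :
    #F ^ 2 ≤ #(F.image fun t => (t.1, t.2.1)) * #(F.image fun t => (t.2.1, t.2.2)) *
      #(F.image fun t => (t.1, t.2.2)) :=
  calc #F ^ 2
      = (∑ p ∈ F.image (fun t => (t.1, t.2.2)), #{t ∈ F | (t.1, t.2.2) = p}) ^ 2 := by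
        rw [← card_eq_sum_card_image]
    _ ≤ #(F.image fun t => (t.1, t.2.2)) *
          ∑ p ∈ F.image (fun t => (t.1, t.2.2)), #{t ∈ F | (t.1, t.2.2) = p} ^ 2 :=
        sq_sum_le_card_mul_sum_sq
    _ ≤ #(F.image fun t => (t.1, t.2.2)) *
          (#(F.image fun t => (t.1, t.2.1)) * #(F.image fun t => (t.2.1, t.2.2))) :=
        Nat.mul_le_mul_left _ (sum_card_fiber_sq_le_card_image_mul_card_image F)
    _ = _ := Nat.mul_comm _ _

end LoomisWhitney

lemma three_mul_le_add_add_of_pow_three_le_mul_mul {a b c x : ℝ} (ha : 0 ≤ a) (hb : 0 ≤ b)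
    (hc : 0 ≤ c) (h : x ^ 3 ≤ a * b * c) : 3 * x ≤ a + b + c := by
  rcases lt_or_ge x 0 with hx | hx
  · linarith
  have hroot : x ≤ a ^ (3⁻¹ : ℝ) * b ^ (3⁻¹ : ℝ) * c ^ (3⁻¹ : ℝ) := by
    rw [← Real.mul_rpow ha hb, ← Real.mul_rpow (mul_nonneg ha hb) hc]
    calc x = (x ^ 3) ^ ((3 : ℕ)⁻¹ : ℝ) := (Real.pow_rpow_inv_natCast hx (by norm_num)).symm
      _ ≤ (a * b * c) ^ (3⁻¹ : ℝ) := by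
        exact_mod_cast Real.rpow_le_rpow (by positivity) h (by norm_num)
  have amgm := Real.geom_mean_le_arith_mean3_weighted (w₁ := 3⁻¹) (w₂ := 3⁻¹) (w₃ := 3⁻¹)
    (by norm_num) (by norm_num) (by norm_num) ha hb hc (by norm_num)
  linarith

theorem stmt_10_general (n : ℕ) (P : ℝ) (hP : 1 ≤ P)
    (F : Finset (ℕ × ℕ × ℕ))
    (hcard : (n : ℝ) ^ 3 / P ≤ F.card) :
    3 * (n : ℝ) ^ 2 / P ^ ((2 : ℝ) / 3) ≤
      ((F.image fun t => (t.1, t.2.1)).card : ℝ) +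
        (F.image fun t => (t.2.1, t.2.2)).card +
        (F.image fun t => (t.1, t.2.2)).card := by
  have hP0 : 0 < P := by linarith
  have hcube : ((n : ℝ) ^ 2 / P ^ ((2 : ℝ) / 3)) ^ 3 = ((n : ℝ) ^ 3 / P) ^ 2 := by
    rw [div_pow, div_pow, ← pow_mul, ← pow_mul, ← Real.rpow_mul_natCast hP0.le]
    norm_num
  have hLW : ((F.card : ℝ)) ^ 2 ≤ ((F.image fun t => (t.1, t.2.1)).card : ℝ) *
      (F.image fun t => (t.2.1, t.2.2)).card * (F.image fun t => (t.1, t.2.2)).card := by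
    exact_mod_cast card_sq_le_card_image_mul_card_image_mul_card_image F
  rw [mul_div_assoc]
  refine three_mul_le_add_add_of_pow_three_le_mul_mul (by positivity) (by positivity)
    (by positivity) ?_
  rw [hcube]
  exact (pow_le_pow_left₀ (by positivity) hcard 2).trans hLW

/-- Square-matrix data-access lower bound: if a processor is assigned a set
`F` of at least `n³/P` lattice points of the `n × n × n` iteration space, then
the total size of the three projections of `F` is at least `3n²/P^{2/3}`. -/
theorem stmt_10 (n : ℕ) (hn : 0 < n) (P : ℝ) (hP : 1 ≤ P)
    (F : Finset (ℕ × ℕ × ℕ))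
    (hF : ∀ t ∈ F, (1 ≤ t.1 ∧ t.1 ≤ n) ∧ (1 ≤ t.2.1 ∧ t.2.1 ≤ n) ∧
      (1 ≤ t.2.2 ∧ t.2.2 ≤ n))
    (hcard : (n : ℝ) ^ 3 / P ≤ F.card) :
    3 * (n : ℝ) ^ 2 / P ^ ((2 : ℝ) / 3) ≤
      ((F.image fun t => (t.1, t.2.1)).card : ℝ) +
        (F.image fun t => (t.2.1, t.2.2)).card +
        (F.image fun t => (t.1, t.2.2)).card :=
  stmt_10_general n P hP F hcard
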